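/- Gradient comparison between the objective and its Gaussian smoothing (Technical Lemma F). Let F : ℝ^d → ℝ be H_F-smooth. Then for every x ∈ ℝ^d and μ > 0, the Gaussian smoothed function F_μ(x) := ∫ F(x+μ·u) dγ(u) is differentiable and ‖∇F(x)‖² ≤ 2·‖∇F_μ(x)‖² + (μ²/2)·H_F²·(d+6)³. -/

import Mathlib

/-!
Differentiating under the integral gives `∇F_μ(x) = E[∇F(x + μu)]`, so the Lipschitz bound on `∇F`
yields `‖∇F_μ(x) - ∇F(x)‖ ≤ H_F |μ| E‖u‖ ≤ H_F |μ| √d`, because `E‖u‖² = d` for the standard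
Gaussian. Squaring with `(a + b)² ≤ 2a² + 2b²` leaves `4d ≤ (d + 6)³`.
-/

open MeasureTheory ProbabilityTheory

/-- The standard Gaussian measure on `EuclideanSpace ℝ (Fin d)`, i.e. the `d`-fold
product of the standard Gaussian measure `N(0,1)` on `ℝ`. -/
noncomputable def stdGaussian (d : ℕ) : Measure (EuclideanSpace ℝ (Fin d)) :=
  (Measure.pi fun _ : Fin d => gaussianReal 0 1).map
    (MeasurableEquiv.toLp 2 (Fin d → ℝ))

open Module InnerProductSpace
open scoped RealInnerProductSpace NNReal

section Gaussian

variable {E : Type*} [NormedAddCommGroup E] [InnerProductSpace ℝ E] [FiniteDimensional ℝ E]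
  [MeasurableSpace E] [BorelSpace E]

lemma integral_norm_sq_stdGaussian :
    ∫ x, ‖x‖ ^ 2 ∂(ProbabilityTheory.stdGaussian E) = finrank ℝ E := by
  set b := stdOrthonormalBasis ℝ E
  have hL2 : MemLp id 2 (ProbabilityTheory.stdGaussian E) := IsGaussian.memLp_two_id
  have hcov (i) : ∫ x, ⟪b i, x⟫ ^ 2 ∂(ProbabilityTheory.stdGaussian E) = 1 := by
    have h := covarianceBilin_apply hL2 (b i) (b i)
    simp only [covarianceBilin_stdGaussian, id_eq, integral_id_stdGaussian, sub_zero] at h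
    rw [innerSL_apply_apply, real_inner_self_eq_norm_sq, b.norm_eq_one] at h
    simpa [pow_two] using h.symm
  simp_rw [← b.sum_sq_inner_right]
  rw [integral_finsetSum _ fun i _ => by simpa using (hL2.const_inner (b i)).integrable_sq]
  simp [hcov]

lemma sq_integral_norm_stdGaussian_le :
    (∫ x, ‖x‖ ∂(ProbabilityTheory.stdGaussian E)) ^ 2 ≤ finrank ℝ E := by
  have hvar := variance_eq_sub (IsGaussian.memLp_two_id (μ := ProbabilityTheory.stdGaussian E)).norm
  simp only [Pi.pow_apply, id_eq, integral_norm_sq_stdGaussian] at hvar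
  linarith [variance_nonneg (fun x : E => ‖x‖) (ProbabilityTheory.stdGaussian E)]

end Gaussian

lemma stdGaussian_eq_stdGaussian_euclideanSpace (d : ℕ) :
    stdGaussian d = ProbabilityTheory.stdGaussian (EuclideanSpace ℝ (Fin d)) :=
  map_pi_eq_stdGaussian

section Smoothing

variable {E G : Type*} [NormedAddCommGroup E] [NormedSpace ℝ E]
  [NormedAddCommGroup G] [NormedSpace ℝ G] {f : E → G} {K : ℝ≥0}

lemma norm_sub_le_of_lipschitzWith_fderiv (hf : Differentiable ℝ f)
    (hf' : LipschitzWith K (fderiv ℝ f)) (x y : E) :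
    ‖f y - f x‖ ≤ (‖fderiv ℝ f x‖ + K * ‖y - x‖) * ‖y - x‖ := by
  refine Convex.norm_image_sub_le_of_norm_fderiv_le (fun z _ => hf z) (fun z hz => ?_)
    (convex_closedBall x ‖y - x‖) (Metric.mem_closedBall_self (norm_nonneg _))
    (by simp [dist_eq_norm])
  rw [Metric.mem_closedBall, dist_eq_norm] at hz
  calc ‖fderiv ℝ f z‖ ≤ ‖fderiv ℝ f x‖ + ‖fderiv ℝ f z - fderiv ℝ f x‖ := norm_le_insert' _ _
    _ ≤ ‖fderiv ℝ f x‖ + K * ‖y - x‖ := by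
      gcongr
      exact (hf'.norm_sub_le z x).trans (by gcongr)

lemma norm_fderiv_add_smul_sub_le (hf' : LipschitzWith K (fderiv ℝ f)) (x u : E) (μ : ℝ) :
    ‖fderiv ℝ f (x + μ • u) - fderiv ℝ f x‖ ≤ K * |μ| * ‖u‖ := by
  simpa [norm_smul, mul_assoc] using hf'.norm_sub_le (x + μ • u) x

variable [MeasurableSpace E] [BorelSpace E] [SecondCountableTopology E] {ν : Measure E}

lemma integrable_fderiv_add_smul [IsFiniteMeasure ν] (hν : Integrable id ν)
    (hf' : LipschitzWith K (fderiv ℝ f)) (x : E) (μ : ℝ) :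
    Integrable (fun u => fderiv ℝ f (x + μ • u)) ν := by
  refine ((integrable_const ‖fderiv ℝ f x‖).add (hν.norm.const_mul (K * |μ|))).mono'
    (hf'.continuous.comp (by fun_prop)).aestronglyMeasurable (ae_of_all _ fun u => ?_)
  calc ‖fderiv ℝ f (x + μ • u)‖
      ≤ ‖fderiv ℝ f x‖ + ‖fderiv ℝ f (x + μ • u) - fderiv ℝ f x‖ := norm_le_insert' _ _
    _ ≤ ‖fderiv ℝ f x‖ + K * |μ| * ‖u‖ := by gcongr; exact norm_fderiv_add_smul_sub_le hf' x u μ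

lemma hasFDerivAt_integral_add_smul [IsFiniteMeasure ν] (hν : MemLp id 2 ν)
    (hf : Differentiable ℝ f) (hf' : LipschitzWith K (fderiv ℝ f)) (μ : ℝ) (x : E) :
    HasFDerivAt (fun y => ∫ u, f (y + μ • u) ∂ν) (∫ u, fderiv ℝ f (x + μ • u) ∂ν) x := by
  have hν₁ : Integrable id ν := hν.integrable one_le_two
  have hgrowth (u : E) :
      ‖f (x + μ • u)‖ ≤ ‖f x‖ + (‖fderiv ℝ f x‖ * |μ| * ‖u‖ + K * μ ^ 2 * ‖u‖ ^ 2) := by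
    have h := norm_sub_le_of_lipschitzWith_fderiv hf hf' x (x + μ • u)
    rw [add_sub_cancel_left, norm_smul, Real.norm_eq_abs] at h
    have hexpand : (‖fderiv ℝ f x‖ + K * (|μ| * ‖u‖)) * (|μ| * ‖u‖)
        = ‖fderiv ℝ f x‖ * |μ| * ‖u‖ + K * μ ^ 2 * ‖u‖ ^ 2 := by
      rw [← sq_abs μ]; ring
    linarith [norm_le_insert' (f (x + μ • u)) (f x)]
  have hbound (u y : E) (hy : y ∈ Metric.ball x 1) :
      ‖fderiv ℝ f (y + μ • u)‖ ≤ ‖fderiv ℝ f x‖ + K * (1 + |μ| * ‖u‖) := by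
    rw [Metric.mem_ball, dist_eq_norm] at hy
    calc ‖fderiv ℝ f (y + μ • u)‖
        ≤ ‖fderiv ℝ f x‖ + ‖fderiv ℝ f (y + μ • u) - fderiv ℝ f x‖ := norm_le_insert' _ _
      _ ≤ ‖fderiv ℝ f x‖ + K * ‖y + μ • u - x‖ := by gcongr; exact hf'.norm_sub_le _ _
      _ ≤ ‖fderiv ℝ f x‖ + K * (1 + |μ| * ‖u‖) := by
        gcongr
        calc ‖y + μ • u - x‖ = ‖(y - x) + μ • u‖ := by abel_nf
          _ ≤ 1 + |μ| * ‖u‖ := by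
            grw [norm_add_le, norm_smul, Real.norm_eq_abs, hy.le]
  refine hasFDerivAt_integral_of_dominated_of_fderiv_le (Metric.ball_mem_nhds x one_pos)
    (Filter.Eventually.of_forall fun y => (hf.continuous.comp (by fun_prop)).aestronglyMeasurable)
    (((integrable_const _).add ((hν₁.norm.const_mul _).add
      ((hν.integrable_norm_pow' (p := 2)).const_mul _))).mono'
      (hf.continuous.comp (by fun_prop)).aestronglyMeasurable (ae_of_all _ hgrowth))
    (hf'.continuous.comp (by fun_prop)).aestronglyMeasurable (ae_of_all _ hbound)
    ((integrable_const _).add (((integrable_const 1).add (hν₁.norm.const_mul _)).const_mul _))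
    (ae_of_all _ fun u y _ => ?_)
  simpa [Function.comp_def] using
    (hf (y + μ • u)).hasFDerivAt.comp y ((hasFDerivAt_id y).add_const (μ • u))

lemma norm_fderiv_integral_add_smul_sub_le [CompleteSpace G] [IsProbabilityMeasure ν]
    (hν : MemLp id 2 ν) (hf : Differentiable ℝ f) (hf' : LipschitzWith K (fderiv ℝ f)) (μ : ℝ) (x : E) :
    ‖fderiv ℝ (fun y => ∫ u, f (y + μ • u) ∂ν) x - fderiv ℝ f x‖
      ≤ K * |μ| * ∫ u, ‖u‖ ∂ν := by
  have hν₁ : Integrable id ν := hν.integrable one_le_two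
  rw [(hasFDerivAt_integral_add_smul hν hf hf' μ x).fderiv, ← integral_const_mul]
  calc ‖∫ u, fderiv ℝ f (x + μ • u) ∂ν - fderiv ℝ f x‖
      = ‖∫ u, (fderiv ℝ f (x + μ • u) - fderiv ℝ f x) ∂ν‖ := by
        rw [integral_sub (integrable_fderiv_add_smul hν₁ hf' x μ) (integrable_const _),
          integral_const, probReal_univ, one_smul]
    _ ≤ ∫ u, K * |μ| * ‖u‖ ∂ν :=
        norm_integral_le_of_norm_le (hν₁.norm.const_mul _)
          (ae_of_all _ fun u => norm_fderiv_add_smul_sub_le hf' x u μ)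

end Smoothing

section Gradient

variable {E : Type*} [NormedAddCommGroup E] [InnerProductSpace ℝ E] [CompleteSpace E]

lemma lipschitzWith_fderiv_iff_gradient {f : E → ℝ} {K : ℝ≥0} :
    LipschitzWith K (fderiv ℝ f) ↔ LipschitzWith K (gradient f) := by
  rw [← toDual_comp_gradient]
  exact (toDual ℝ E).isometry.lipschitzWith_iff K

lemma norm_gradient_eq_norm_fderiv (f : E → ℝ) (x : E) : ‖gradient f x‖ = ‖fderiv ℝ f x‖ := by
  rw [← toDual_gradient, LinearIsometryEquiv.norm_map]

end Gradient

theorem gradient_comparison_smoothing_general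
    (d : ℕ)
    (F : EuclideanSpace ℝ (Fin d) → ℝ)
    (H_F : ℝ)
    (hFdiff : Differentiable ℝ F)
    (hFgradLip : LipschitzWith H_F.toNNReal (gradient F))
    (x : EuclideanSpace ℝ (Fin d)) (μ : ℝ)
    (Fμ : EuclideanSpace ℝ (Fin d) → ℝ)
    (hFμ : ∀ y, Fμ y = ∫ u, F (y + μ • u) ∂(stdGaussian d)) :
    Differentiable ℝ Fμ ∧
      ‖gradient F x‖ ^ 2
        ≤ 2 * ‖gradient Fμ x‖ ^ 2 + (μ ^ 2 / 2) * H_F ^ 2 * ((d : ℝ) + 6) ^ 3 := by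
  have hFμ' : Fμ = fun y => ∫ u, F (y + μ • u) ∂(ProbabilityTheory.stdGaussian _) := by
    rw [← stdGaussian_eq_stdGaussian_euclideanSpace]
    exact funext hFμ
  have hF' := lipschitzWith_fderiv_iff_gradient.mpr hFgradLip
  have hL2 : MemLp id 2 (ProbabilityTheory.stdGaussian (EuclideanSpace ℝ (Fin d))) :=
    IsGaussian.memLp_two_id
  refine ⟨hFμ' ▸ fun y => (hasFDerivAt_integral_add_smul hL2 hFdiff hF' μ y).differentiableAt, ?_⟩
  have hclose := hFμ' ▸ norm_fderiv_integral_add_smul_sub_le hL2 hFdiff hF' μ x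
  set m := ∫ u, ‖u‖ ∂(ProbabilityTheory.stdGaussian (EuclideanSpace ℝ (Fin d)))
  set K := H_F.toNNReal
  have hm : m ^ 2 ≤ d := by
    simpa using sq_integral_norm_stdGaussian_le (E := EuclideanSpace ℝ (Fin d))
  have hK : (K : ℝ) ^ 2 ≤ H_F ^ 2 := by
    rcases le_total 0 H_F with h | h <;> simp [K, h, sq_nonneg]
  rw [norm_gradient_eq_norm_fderiv, norm_gradient_eq_norm_fderiv]
  calc ‖fderiv ℝ F x‖ ^ 2
      ≤ (‖fderiv ℝ Fμ x‖ + K * |μ| * m) ^ 2 := by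
        refine pow_le_pow_left₀ (norm_nonneg _) ?_ 2
        grw [norm_le_insert' (fderiv ℝ F x) (fderiv ℝ Fμ x), norm_sub_rev, hclose]
    _ ≤ 2 * ‖fderiv ℝ Fμ x‖ ^ 2 + 2 * (K * |μ| * m) ^ 2 := by
        linarith [add_sq_le (a := ‖fderiv ℝ Fμ x‖) (b := K * |μ| * m)]
    _ ≤ 2 * ‖fderiv ℝ Fμ x‖ ^ 2 + μ ^ 2 / 2 * H_F ^ 2 * (4 * d) := by
        rw [mul_pow, mul_pow, sq_abs]
        nlinarith [mul_le_mul hK hm (sq_nonneg m) (sq_nonneg H_F), sq_nonneg μ]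
    _ ≤ _ := by
        gcongr
        have hd₀ : (0 : ℝ) ≤ d := d.cast_nonneg
        nlinarith [mul_nonneg hd₀ hd₀, mul_nonneg (mul_nonneg hd₀ hd₀) hd₀]

/-- Gradient comparison between the objective and its Gaussian smoothing
(Technical Lemma F). -/
theorem gradient_comparison_smoothing
    (d : ℕ) (hd : 0 < d)
    (F : EuclideanSpace ℝ (Fin d) → ℝ)
    (H_F : ℝ) (hH_F : 0 ≤ H_F)
    (hFdiff : Differentiable ℝ F)
    (hFgradLip : LipschitzWith H_F.toNNReal (gradient F))
    (x : EuclideanSpace ℝ (Fin d)) (μ : ℝ) (hμ : 0 < μ)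
    (Fμ : EuclideanSpace ℝ (Fin d) → ℝ)
    (hFμ : ∀ y, Fμ y = ∫ u, F (y + μ • u) ∂(stdGaussian d)) :
    Differentiable ℝ Fμ ∧
      ‖gradient F x‖ ^ 2
        ≤ 2 * ‖gradient Fμ x‖ ^ 2 + (μ ^ 2 / 2) * H_F ^ 2 * ((d : ℝ) + 6) ^ 3 :=
  gradient_comparison_smoothing_general d F H_F hFdiff hFgradLip x μ Fμ hFμ
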